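/- Let L be a set of s positive integers. If F ⊆ 2^[n] satisfies min{|A \ B|, |B \ A|} ∈ L for every pair of distinct A, B ∈ F, then |F| ≤ Σ_{i=0}^{s} C(n, i). -/

import Mathlib

/-!
Polynomial method. For `A ∈ F` put `f_A(B) = ∏_{ℓ ∈ L} (|A \ B| - ℓ)`. Then `f_A(A) ≠ 0`, since
`0 ∉ L`, while `f_A(B) = 0` for `B ≠ A` with `|A| ≤ |B|`, because then
`min{|A \ B|, |B \ A|} = |A \ B| ∈ L`. Ordering `F` by size makes the evaluation matrix
triangular, so the `f_A` are linearly independent. Each `f_A` is a combination of the functions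
`B ↦ [S ⊆ B]` with `|S| ≤ s`, since multiplying by `|A \ B|` raises the size of `S` by at most one;
there are `∑_{i ≤ s} C(n, i)` such functions.
-/

open Finset Submodule Module

section SubsetIndicator

variable (K : Type*) {α : Type*} [DecidableEq α]

/-- The multilinear monomial `x^S` evaluated at the characteristic vector of `B`. -/
def subsetIndicator [Zero K] [One K] (S : Finset α) : Finset α → K :=
  fun B => if S ⊆ B then 1 else 0

variable (α) [CommRing K]

def subsetIndicatorSpan (k : ℕ) : Submodule K (Finset α → K) :=
  span K (Set.range fun S : {S : Finset α // #S ≤ k} => subsetIndicator K S.1)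

variable {α K}

lemma subsetIndicator_mem_subsetIndicatorSpan {S : Finset α} {k : ℕ} (hS : #S ≤ k) :
    subsetIndicator K S ∈ subsetIndicatorSpan K α k :=
  subset_span ⟨⟨S, hS⟩, rfl⟩

lemma subsetIndicatorSpan_mono {k m : ℕ} (hkm : k ≤ m) :
    subsetIndicatorSpan K α k ≤ subsetIndicatorSpan K α m :=
  span_le.2 <| Set.range_subset_iff.2 fun S =>
    subsetIndicator_mem_subsetIndicatorSpan (S.2.trans hkm)

lemma card_sdiff_mul_subsetIndicator (A S B : Finset α) :
    (#(A \ B) : K) * subsetIndicator K S B =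
      ∑ i ∈ A \ S, (subsetIndicator K S B - subsetIndicator K (insert i S) B) := by
  unfold subsetIndicator
  -- when `S ⊆ B`, `|A \ B|` counts the `i ∈ A \ S` outside `B`
  by_cases hSB : S ⊆ B
  · have hA : A \ B = {i ∈ A \ S | i ∉ B} := by
      ext i
      simp only [mem_sdiff, mem_filter]
      exact ⟨fun h => ⟨⟨h.1, fun hiS => h.2 (hSB hiS)⟩, h.2⟩, fun h => ⟨h.1.1, h.2⟩⟩
    rw [if_pos hSB, mul_one, hA, card_filter, Nat.cast_sum]
    refine sum_congr rfl fun i _ => ?_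
    by_cases hiB : i ∈ B <;> simp [hSB, hiB, insert_subset_iff]
  · have : ∀ i, ¬ insert i S ⊆ B := fun i h => hSB ((subset_insert i S).trans h)
    simp [hSB, this]

lemma mul_card_sdiff_mem_subsetIndicatorSpan (A : Finset α) {k : ℕ} {g : Finset α → K}
    (hg : g ∈ subsetIndicatorSpan K α k) :
    (fun B => (#(A \ B) : K) * g B) ∈ subsetIndicatorSpan K α (k + 1) := by
  suffices subsetIndicatorSpan K α k ≤ (subsetIndicatorSpan K α (k + 1)).comap
      (LinearMap.mulLeft K fun B => (#(A \ B) : K)) from this hg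
  refine span_le.2 <| Set.range_subset_iff.2 fun ⟨S, hS⟩ => ?_
  have hsum : (LinearMap.mulLeft K fun B => (#(A \ B) : K)) (subsetIndicator K S) =
      ∑ i ∈ A \ S, (subsetIndicator K S - subsetIndicator K (insert i S)) := by
    funext B
    simp [card_sdiff_mul_subsetIndicator]
  simp only [SetLike.mem_coe, mem_comap, hsum]
  refine sum_mem fun i _ => sub_mem ?_ ?_ <;>
    refine subsetIndicator_mem_subsetIndicatorSpan ?_
  · omega
  · exact (card_insert_le i S).trans (by omega)

lemma prod_card_sdiff_sub_mem_subsetIndicatorSpan {ι : Type*} (c : ι → K) (A : Finset α)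
    (L : Finset ι) :
    (fun B => ∏ ℓ ∈ L, ((#(A \ B) : K) - c ℓ)) ∈ subsetIndicatorSpan K α #L := by
  classical
  induction L using Finset.induction with
  | empty =>
    rw [card_empty]
    convert subsetIndicator_mem_subsetIndicatorSpan (K := K) (S := (∅ : Finset α)) (k := 0) le_rfl
    simp [subsetIndicator]
  | insert ℓ L hℓ ih =>
    have hprod : (fun B => ∏ m ∈ insert ℓ L, ((#(A \ B) : K) - c m)) =
        (fun B => (#(A \ B) : K) * ∏ m ∈ L, ((#(A \ B) : K) - c m)) -
          c ℓ • fun B => ∏ m ∈ L, ((#(A \ B) : K) - c m) := by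
      funext B
      simp [prod_insert hℓ, sub_mul]
    rw [hprod, card_insert_of_notMem hℓ]
    exact sub_mem (mul_card_sdiff_mem_subsetIndicatorSpan A ih)
      (smul_mem _ _ (subsetIndicatorSpan_mono L.card.le_succ ih))

end SubsetIndicator

lemma Finset.card_filter_card_le_eq_sum_choose {α : Type*} [Fintype α] (k : ℕ) :
    #{S : Finset α | #S ≤ k} = ∑ i ∈ range (k + 1), (Fintype.card α).choose i := by
  classical
  rw [card_eq_sum_card_fiberwise (f := card) (t := range (k + 1))
    (fun S hS => by simpa [Nat.lt_succ_iff] using hS)]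
  refine sum_congr rfl fun i hi => ?_
  rw [filter_filter, ← card_univ, ← card_powersetCard, powersetCard_eq_filter, powerset_univ]
  congr 1
  ext S
  simp only [mem_filter, mem_range, mem_univ, true_and] at hi ⊢
  omega

lemma finrank_subsetIndicatorSpan_le (K : Type*) {α : Type*} [DecidableEq α] [Fintype α]
    [Field K] (k : ℕ) :
    finrank K (subsetIndicatorSpan K α k) ≤ ∑ i ∈ range (k + 1), (Fintype.card α).choose i :=
  (finrank_range_le_card _).trans_eq <| by
    rw [Fintype.card_subtype, card_filter_card_le_eq_sum_choose]

theorem linearIndependent_of_eval_triangular {ι β γ K : Type*} [LinearOrder γ] [Ring K]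
    [NoZeroDivisors K] (f : ι → β → K) (x : ι → β) (r : ι → γ)
    (hdiag : ∀ i, f i (x i) ≠ 0) (hzero : ∀ i j, i ≠ j → r i ≤ r j → f i (x j) = 0) :
    LinearIndependent K f := by
  classical
  rw [linearIndependent_iff']
  intro t g hg i hi
  by_contra hgi
  obtain ⟨j, hj, hmax⟩ := {i ∈ t | g i ≠ 0}.exists_max_image r ⟨i, mem_filter.2 ⟨hi, hgi⟩⟩
  rw [mem_filter] at hj
  have hsum := congrFun hg (x j)
  simp only [Finset.sum_apply, Pi.smul_apply, smul_eq_mul, Pi.zero_apply] at hsum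
  rw [sum_eq_single_of_mem j hj.1 fun l hl hlj => ?_] at hsum
  · exact mul_ne_zero hj.2 (hdiag j) hsum
  by_cases hgl : g l = 0
  · rw [hgl, zero_mul]
  · rw [hzero l j hlj (hmax l (mem_filter.2 ⟨hl, hgl⟩)), mul_zero]

theorem stmt_17 (n s : ℕ) (L : Finset ℕ) (hLpos : ∀ ℓ ∈ L, 0 < ℓ)
    (hLs : L.card = s)
    (F : Finset (Finset (Fin n)))
    (hF : ∀ A ∈ F, ∀ B ∈ F, A ≠ B → min (A \ B).card (B \ A).card ∈ L) :
    F.card ≤ ∑ i ∈ Finset.range (s + 1), n.choose i := by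
  set f : F → Finset (Fin n) → ℚ := fun A B => ∏ ℓ ∈ L, ((#(A.1 \ B) : ℚ) - ℓ)
  have hdiag (A : F) : f A A ≠ 0 := by
    simpa [f, prod_eq_zero_iff] using fun ℓ hℓ => (hLpos ℓ hℓ).ne'
  have hzero (A B : F) (hAB : A ≠ B) (hcard : #A.1 ≤ #B.1) : f A B = 0 := by
    have hmin := hF A A.2 B B.2 (Subtype.coe_ne_coe.2 hAB)
    rw [min_eq_left (card_sdiff_le_card_sdiff_iff.2 hcard)] at hmin
    exact prod_eq_zero hmin (sub_self _)
  have hli : LinearIndependent ℚ f :=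
    linearIndependent_of_eval_triangular f Subtype.val (fun A => #A.1) hdiag hzero
  have hspan : span ℚ (Set.range f) ≤ subsetIndicatorSpan ℚ (Fin n) s :=
    span_le.2 <| Set.range_subset_iff.2 fun A =>
      hLs ▸ prod_card_sdiff_sub_mem_subsetIndicatorSpan Nat.cast A.1 L
  calc #F = finrank ℚ (span ℚ (Set.range f)) := by rw [finrank_span_eq_card hli, Fintype.card_coe]
    _ ≤ finrank ℚ (subsetIndicatorSpan ℚ (Fin n) s) := Submodule.finrank_mono hspan
    _ ≤ _ := by simpa using finrank_subsetIndicatorSpan_le ℚ (α := Fin n) s
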